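/- For the metric g = ε(e^{2t} dx² + e^{-2t} dy²) + μ dt² on ℝ³ with ε = ±1 and μ ≠ 0, every smooth vector field X = X¹∂_x + X²∂_y + X³∂_t solving L_X g + ρ = λ g necessarily has λ = -2/μ and is of the form X¹ = A₁ - (A₃ + 1/μ)x, X² = A₂ + (A₃ - 1/μ)y, X³ = A₃ for some real constants A₁, A₂, A₃. -/

import Mathlib

open Real

noncomputable def pd {n : ℕ} (i : Fin n) (f : (Fin n → ℝ) → ℝ) (p : Fin n → ℝ) : ℝ :=
  fderiv ℝ f p (Pi.single i 1)

noncomputable def g3 (ε μ : ℝ) (p : Fin 3 → ℝ) : Matrix (Fin 3) (Fin 3) ℝ :=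
  Matrix.diagonal ![ε * exp (2 * p 2), ε * exp (-2 * p 2), μ]

noncomputable def ρ3 : Matrix (Fin 3) (Fin 3) ℝ := Matrix.diagonal ![0, 0, -2]

noncomputable def lieD {n : ℕ} (g : (Fin n → ℝ) → Matrix (Fin n) (Fin n) ℝ)
    (X : Fin n → (Fin n → ℝ) → ℝ) (i j : Fin n) (p : Fin n → ℝ) : ℝ :=
  (∑ k, X k p * pd k (fun q => g q i j) p)
    + (∑ k, g p k j * pd i (X k) p) + (∑ k, g p i k * pd j (X k) p)

section Aux

abbrev V3 := Fin 3 → ℝ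

lemma pd_congr {i : Fin 3} {f g : V3 → ℝ} (h : ∀ q, f q = g q) (p : V3) :
    pd i f p = pd i g p := by rw [show f = g from funext h]

lemma pd_const (i : Fin 3) (c : ℝ) (p : V3) : pd i (fun _ => c) p = 0 := by
  simp [pd]

lemma pd_zero_of_zero {f : V3 → ℝ} (h : ∀ q, f q = 0) (i : Fin 3) (p : V3) :
    pd i f p = 0 := by
  rw [pd_congr h p]; exact pd_const i 0 p

lemma pd_coord (i j : Fin 3) (p : V3) : pd i (fun q => q j) p = (Pi.single i 1 : V3) j := by
  have h : HasFDerivAt (fun q : V3 => q j) (ContinuousLinearMap.proj j : V3 →L[ℝ] ℝ) p :=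
    hasFDerivAt_apply j p
  simp [pd, h.fderiv]

lemma pd_add {f g : V3 → ℝ} (i : Fin 3) (p : V3) (hf : DifferentiableAt ℝ f p)
    (hg : DifferentiableAt ℝ g p) :
    pd i (fun q => f q + g q) p = pd i f p + pd i g p := by
  simp [pd, fderiv_fun_add hf hg]

lemma pd_mul {f g : V3 → ℝ} (i : Fin 3) (p : V3) (hf : DifferentiableAt ℝ f p)
    (hg : DifferentiableAt ℝ g p) :
    pd i (fun q => f q * g q) p = pd i f p * g p + f p * pd i g p := by
  simp [pd, fderiv_fun_mul hf hg]; ring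

lemma pd_const_mul {f : V3 → ℝ} (i : Fin 3) (p : V3) (c : ℝ) (hf : DifferentiableAt ℝ f p) :
    pd i (fun q => c * f q) p = c * pd i f p := by
  simp [pd, fderiv_const_mul hf c]

lemma pd_const_sub {f : V3 → ℝ} (i : Fin 3) (p : V3) (c : ℝ) (hf : DifferentiableAt ℝ f p) :
    pd i (fun q => c - f q) p = -pd i f p := by
  simp [pd, fderiv_const_sub c]

lemma pd_const_add {f : V3 → ℝ} (i : Fin 3) (p : V3) (c : ℝ) (hf : DifferentiableAt ℝ f p) :
    pd i (fun q => c + f q) p = pd i f p := by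
  simp [pd, fderiv_const_add c]

lemma pd_sub {f g : V3 → ℝ} (i : Fin 3) (p : V3) (hf : DifferentiableAt ℝ f p)
    (hg : DifferentiableAt ℝ g p) :
    pd i (fun q => f q - g q) p = pd i f p - pd i g p := by
  simp [pd, fderiv_fun_sub hf hg]

lemma pd_neg {f : V3 → ℝ} (i : Fin 3) (p : V3) :
    pd i (fun q => -f q) p = -pd i f p := by
  simp [pd, fderiv_neg]

lemma dcoord (j : Fin 3) : Differentiable ℝ (fun q : V3 => q j) :=
  fun p => (hasFDerivAt_apply j p).differentiableAt

lemma pd_exp_lin (c : ℝ) (i : Fin 3) (p : V3) :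
    pd i (fun q => Real.exp (c * q 2)) p
      = c * (Pi.single i 1 : V3) 2 * Real.exp (c * p 2) := by
  have h1 : HasFDerivAt (fun q : V3 => q 2) (ContinuousLinearMap.proj 2 : V3 →L[ℝ] ℝ) p :=
    hasFDerivAt_apply 2 p
  have h2 := (h1.const_mul c).exp
  simp [pd, h2.fderiv]
  ring

lemma contDiff_exp_lin (c : ℝ) : ContDiff ℝ (⊤ : ℕ∞) (fun q : V3 => Real.exp (c * q 2)) :=
  Real.contDiff_exp.comp (contDiff_const.mul (contDiff_apply (𝕜 := ℝ) (E := ℝ) (2 : Fin 3)))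

lemma diff_exp_lin (c : ℝ) : Differentiable ℝ (fun q : V3 => Real.exp (c * q 2)) :=
  (contDiff_exp_lin c).differentiable (by simp)

lemma pd_smooth {f : V3 → ℝ} (i : Fin 3) (hf : ContDiff ℝ (⊤ : ℕ∞) f) : ContDiff ℝ (⊤ : ℕ∞) (pd i f) :=
  (hf.fderiv_right (by simp)).clm_apply contDiff_const

lemma pd_gdiag (a c : ℝ) (k : Fin 3) (p : V3) :
    pd k (fun q => a * Real.exp (c * q 2)) p
      = a * c * (Pi.single k 1 : V3) 2 * Real.exp (c * p 2) := by
  rw [pd_const_mul k p a (diff_exp_lin c p), pd_exp_lin]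
  ring

lemma pd_exp_mul {h : V3 → ℝ} (c : ℝ) (hh : Differentiable ℝ h) (i : Fin 3) (p : V3) :
    pd i (fun q => Real.exp (c * q 2) * h q) p
      = c * (Pi.single i 1 : V3) 2 * Real.exp (c * p 2) * h p
        + Real.exp (c * p 2) * pd i h p := by
  rw [pd_mul i p (diff_exp_lin c p) (hh p), pd_exp_lin]

lemma pd_cexp_mul {h : V3 → ℝ} (a c : ℝ) (hh : Differentiable ℝ h) (i : Fin 3) (p : V3) :
    pd i (fun q => a * Real.exp (c * q 2) * h q) p
      = a * c * (Pi.single i 1 : V3) 2 * Real.exp (c * p 2) * h p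
        + a * Real.exp (c * p 2) * pd i h p := by
  rw [pd_mul i p (((diff_exp_lin c).const_mul a) p) (hh p), pd_gdiag]

lemma pd_comm {f : V3 → ℝ} (hf : ContDiff ℝ (⊤ : ℕ∞) f) (i j : Fin 3) (p : V3) :
    pd i (pd j f) p = pd j (pd i f) p := by
  have hd : Differentiable ℝ f := hf.differentiable (by simp)
  have hf' : ContDiff ℝ (⊤ : ℕ∞) (fderiv ℝ f) := hf.fderiv_right (by simp)
  have h1 : ∀ q, HasFDerivAt f (fderiv ℝ f q) q := fun q => (hd q).hasFDerivAt
  have h2 : HasFDerivAt (fderiv ℝ f) (fderiv ℝ (fderiv ℝ f) p) p :=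
    (hf'.differentiable (by simp) p).hasFDerivAt
  have key : ∀ v w : V3,
      fderiv ℝ (fun q => fderiv ℝ f q v) p w = fderiv ℝ (fderiv ℝ f) p w v := by
    intro v w
    have h3 := h2.clm_apply (hasFDerivAt_const v p)
    rw [h3.fderiv]
    simp
  have hsym := second_derivative_symmetric h1 h2
  show fderiv ℝ (fun q => fderiv ℝ f q (Pi.single j 1)) p (Pi.single i 1)
      = fderiv ℝ (fun q => fderiv ℝ f q (Pi.single i 1)) p (Pi.single j 1)
  rw [key, key, hsym]

lemma const_of_pd_zero {f : V3 → ℝ} (hf : Differentiable ℝ f)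
    (h : ∀ i p, pd i f p = 0) (p q : V3) : f p = f q := by
  apply is_const_of_fderiv_eq_zero hf
  intro x
  ext v
  have hv : v = ∑ i, v i • (Pi.single i 1 : V3) := by
    rw [← Finset.univ_sum_single v]
    congr 1; ext i j
    simp [Pi.single_apply]
  rw [ContinuousLinearMap.zero_apply]
  conv_lhs => rw [hv]
  rw [map_sum]
  simp only [map_smul]
  have hz : ∀ i : Fin 3, fderiv ℝ f x (Pi.single i 1) = 0 := fun i => h i x
  simp [hz]

end Aux

/-- Every smooth vector field X solving L_X g + ρ = λ g for the 3D generalized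
symmetric metric has λ = -2/μ and the form X¹ = A₁-(A₃+1/μ)x, X² = A₂+(A₃-1/μ)y,
X³ = A₃. -/
theorem soliton_3d_classification (ε μ : ℝ) (hε : ε = 1 ∨ ε = -1) (hμ : μ ≠ 0)
    (X : Fin 3 → (Fin 3 → ℝ) → ℝ) (hX : ∀ k, ContDiff ℝ (⊤ : ℕ∞) (X k)) (lam : ℝ)
    (hsol : ∀ p : Fin 3 → ℝ, ∀ i j : Fin 3,
      lieD (g3 ε μ) X i j p + ρ3 i j = lam * g3 ε μ p i j) :
    lam = -2/μ ∧
    ∃ A₁ A₂ A₃ : ℝ, ∀ p : Fin 3 → ℝ,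
      X 0 p = A₁ - (A₃ + 1/μ) * p 0 ∧
      X 1 p = A₂ + (A₃ - 1/μ) * p 1 ∧
      X 2 p = A₃ := by
  have hεne : ε ≠ 0 := by rcases hε with h | h <;> rw [h] <;> norm_num
  have hε2 : ε * ε = 1 := by rcases hε with h | h <;> rw [h] <;> norm_num
  have hEne : ∀ x : ℝ, Real.exp x ≠ 0 := Real.exp_ne_zero
  have dX : ∀ k, Differentiable ℝ (X k) := fun k => (hX k).differentiable (by simp)
  have s1 : ∀ (i : Fin 3) k, ContDiff ℝ (⊤ : ℕ∞) (pd i (X k)) := fun i k => pd_smooth i (hX k)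
  have d1 : ∀ (i : Fin 3) k, Differentiable ℝ (pd i (X k)) :=
    fun i k => (s1 i k).differentiable (by simp)
  have s2 : ∀ (i j : Fin 3) k, ContDiff ℝ (⊤ : ℕ∞) (pd i (pd j (X k))) :=
    fun i j k => pd_smooth i (s1 j k)
  have d2 : ∀ (i j : Fin 3) k, Differentiable ℝ (pd i (pd j (X k))) :=
    fun i j k => (s2 i j k).differentiable (by simp)
  -- metric entry functions
  have hg00 : ∀ q : Fin 3 → ℝ, g3 ε μ q 0 0 = ε * Real.exp (2 * q 2) := fun q => by
    simp [g3]
  have hg11 : ∀ q : Fin 3 → ℝ, g3 ε μ q 1 1 = ε * Real.exp ((-2) * q 2) := fun q => by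
    rw [show (-2:ℝ) * q 2 = -(2 * q 2) by ring]; simp [g3]
  have hg22 : ∀ q : Fin 3 → ℝ, g3 ε μ q 2 2 = μ := fun q => by simp [g3]
  have hg01 : ∀ q : Fin 3 → ℝ, g3 ε μ q 0 1 = 0 := fun q => by simp [g3]
  have hg10 : ∀ q : Fin 3 → ℝ, g3 ε μ q 1 0 = 0 := fun q => by simp [g3]
  have hg02 : ∀ q : Fin 3 → ℝ, g3 ε μ q 0 2 = 0 := fun q => by simp [g3]
  have hg20 : ∀ q : Fin 3 → ℝ, g3 ε μ q 2 0 = 0 := fun q => by simp [g3]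
  have hg12 : ∀ q : Fin 3 → ℝ, g3 ε μ q 1 2 = 0 := fun q => by simp [g3]
  have hg21 : ∀ q : Fin 3 → ℝ, g3 ε μ q 2 1 = 0 := fun q => by simp [g3]
  have hs02 : (Pi.single (0 : Fin 3) 1 : V3) 2 = 0 := by simp [Pi.single_apply]
  have hs12 : (Pi.single (1 : Fin 3) 1 : V3) 2 = 0 := by simp [Pi.single_apply]
  have hs22 : (Pi.single (2 : Fin 3) 1 : V3) 2 = 1 := by simp [Pi.single_apply]
  -- ρ3 values
  have hr00 : (ρ3 0 0 : ℝ) = 0 := by simp [ρ3]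
  have hr11 : (ρ3 1 1 : ℝ) = 0 := by simp [ρ3]
  have hr22 : (ρ3 2 2 : ℝ) = -2 := by simp [ρ3]
  have hr01 : (ρ3 0 1 : ℝ) = 0 := by simp [ρ3]
  have hr02 : (ρ3 0 2 : ℝ) = 0 := by simp [ρ3]
  have hr12 : (ρ3 1 2 : ℝ) = 0 := by simp [ρ3]
  -- Equation (0,0)
  have E00 : ∀ p : Fin 3 → ℝ, pd 0 (X 0) p = lam / 2 - X 2 p := by
    intro p
    have h := hsol p 0 0
    simp only [lieD, Fin.sum_univ_three] at h
    rw [pd_congr (i := 0) hg00 p, pd_congr (i := 1) hg00 p, pd_congr (i := 2) hg00 p,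
      pd_gdiag, pd_gdiag, pd_gdiag, hs02, hs12, hs22,
      hg00 p, hg10 p, hg20 p, hg01 p, hg02 p, hr00] at h
    have hne : (2 : ℝ) * ε * Real.exp (2 * p 2) ≠ 0 :=
      mul_ne_zero (mul_ne_zero two_ne_zero hεne) (hEne _)
    apply mul_left_cancel₀ hne
    linear_combination h
  -- Equation (1,1)
  have E11 : ∀ p : Fin 3 → ℝ, pd 1 (X 1) p = lam / 2 + X 2 p := by
    intro p
    have h := hsol p 1 1
    simp only [lieD, Fin.sum_univ_three] at h
    rw [pd_congr (i := 0) hg11 p, pd_congr (i := 1) hg11 p, pd_congr (i := 2) hg11 p,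
      pd_gdiag, pd_gdiag, pd_gdiag, hs02, hs12, hs22,
      hg11 p, hg01 p, hg21 p, hg10 p, hg12 p, hr11] at h
    have hne : (2 : ℝ) * ε * Real.exp ((-2) * p 2) ≠ 0 :=
      mul_ne_zero (mul_ne_zero two_ne_zero hεne) (hEne _)
    apply mul_left_cancel₀ hne
    linear_combination h
  -- Equation (2,2)
  have E22 : ∀ p : Fin 3 → ℝ, pd 2 (X 2) p = lam / 2 + 1 / μ := by
    intro p
    have h := hsol p 2 2
    simp only [lieD, Fin.sum_univ_three] at h
    rw [pd_congr (i := 0) hg22 p, pd_congr (i := 1) hg22 p, pd_congr (i := 2) hg22 p,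
      pd_const, pd_const, pd_const,
      hg22 p, hg02 p, hg12 p, hg20 p, hg21 p, hr22] at h
    rw [div_add_div _ _ two_ne_zero hμ, eq_div_iff (mul_ne_zero two_ne_zero hμ)]
    linear_combination h
  -- Equation (0,1)
  have E01 : ∀ p : Fin 3 → ℝ,
      Real.exp (2 * p 2) * pd 1 (X 0) p + Real.exp ((-2) * p 2) * pd 0 (X 1) p = 0 := by
    intro p
    have h := hsol p 0 1
    simp only [lieD, Fin.sum_univ_three] at h
    rw [pd_congr (i := 0) hg01 p, pd_congr (i := 1) hg01 p, pd_congr (i := 2) hg01 p,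
      pd_const, pd_const, pd_const,
      hg01 p, hg11 p, hg21 p, hg00 p, hg02 p, hr01] at h
    linear_combination ε * h
      - (Real.exp (2 * p 2) * pd 1 (X 0) p + Real.exp ((-2) * p 2) * pd 0 (X 1) p) * hε2
  -- Equation (0,2)
  have E02 : ∀ p : Fin 3 → ℝ,
      μ * pd 0 (X 2) p + ε * Real.exp (2 * p 2) * pd 2 (X 0) p = 0 := by
    intro p
    have h := hsol p 0 2
    simp only [lieD, Fin.sum_univ_three] at h
    rw [pd_congr (i := 0) hg02 p, pd_congr (i := 1) hg02 p, pd_congr (i := 2) hg02 p,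
      pd_const, pd_const, pd_const,
      hg02 p, hg12 p, hg22 p, hg00 p, hg01 p, hr02] at h
    linear_combination h
  -- Equation (1,2)
  have E12 : ∀ p : Fin 3 → ℝ,
      μ * pd 1 (X 2) p + ε * Real.exp ((-2) * p 2) * pd 2 (X 1) p = 0 := by
    intro p
    have h := hsol p 1 2
    simp only [lieD, Fin.sum_univ_three] at h
    rw [pd_congr (i := 0) hg12 p, pd_congr (i := 1) hg12 p, pd_congr (i := 2) hg12 p,
      pd_const, pd_const, pd_const,
      hg12 p, hg02 p, hg22 p, hg10 p, hg11 p, hr12] at h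
    linear_combination h
  -- second derivative of X 2 along t vanishes appropriately
  have hin20 : ∀ q, pd 2 (pd 0 (X 2)) q = 0 := by
    intro q
    rw [pd_comm (hX 2) 2 0 q, pd_congr (i := (0 : Fin 3)) E22 q, pd_const]
  -- ∂₀ of E02 : μ ∂₀∂₀X2 = ε c e^{2t}
  have hI0 : ∀ p : Fin 3 → ℝ, μ * pd 0 (pd 0 (X 2)) p
      = ε * (lam / 2 + 1 / μ) * Real.exp (2 * p 2) := by
    intro p
    have h := pd_congr (i := (0 : Fin 3)) E02 p
    rw [pd_const] at h
    rw [pd_add 0 p (((d1 0 2).const_mul μ) p) ((((diff_exp_lin 2).const_mul ε).fun_mul (d1 2 0)) p),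
      pd_const_mul 0 p μ (d1 0 2 p), pd_cexp_mul ε 2 (d1 2 0) 0 p, hs02] at h
    have hkey : pd 0 (pd 2 (X 0)) p = -(lam / 2 + 1 / μ) := by
      rw [pd_comm (hX 0) 0 2 p, pd_congr (i := (2 : Fin 3)) E00 p,
        pd_const_sub 2 p _ (dX 2 p), E22 p]
    rw [hkey] at h
    linear_combination h
  -- killing the constant: c = 0
  have hc0 : lam / 2 + 1 / μ = 0 := by
    have h := pd_congr (i := (2 : Fin 3)) hI0 (fun _ => (0 : ℝ))
    rw [pd_const_mul 2 _ μ (d2 0 0 2 _), pd_comm (s1 0 2) 2 0 _,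
      pd_zero_of_zero hin20 0 _, pd_gdiag (ε * (lam / 2 + 1 / μ)) 2 2 _, hs22] at h
    by_contra hcc
    have hne : ε * (lam / 2 + 1 / μ) * 2 * 1 * Real.exp (2 * (fun _ => (0:ℝ)) 2) ≠ 0 := by
      apply mul_ne_zero
      apply mul_ne_zero
      apply mul_ne_zero (mul_ne_zero hεne hcc) two_ne_zero
      exact one_ne_zero
      exact hEne _
    rw [mul_zero] at h
    exact hne h.symm
  have hlam : lam = -2 / μ := by
    rw [eq_div_iff hμ]
    have hc0' := hc0
    field_simp at hc0'
    linarith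
  have E22' : ∀ q, pd 2 (X 2) q = 0 := fun q => by rw [E22 q]; exact hc0
  have h2X2zero : ∀ (i : Fin 3) (q : Fin 3 → ℝ), pd 2 (pd i (X 2)) q = 0 := fun i q => by
    rw [pd_comm (hX 2) 2 i q]
    exact pd_zero_of_zero E22' i q
  -- ∂₀∂₀ X2 = 0
  have hD00X2 : ∀ p : Fin 3 → ℝ, pd 0 (pd 0 (X 2)) p = 0 := by
    intro p
    have h := hI0 p
    rw [hc0] at h
    have h2 : μ * pd 0 (pd 0 (X 2)) p = μ * 0 := by linear_combination h
    exact mul_left_cancel₀ hμ h2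
  -- ∂₁∂₁ X2 = 0
  have hD11X2 : ∀ p : Fin 3 → ℝ, pd 1 (pd 1 (X 2)) p = 0 := by
    intro p
    have h := pd_congr (i := (1 : Fin 3)) E12 p
    rw [pd_const] at h
    rw [pd_add 1 p (((d1 1 2).const_mul μ) p)
        ((((diff_exp_lin (-2)).const_mul ε).fun_mul (d1 2 1)) p),
      pd_const_mul 1 p μ (d1 1 2 p), pd_cexp_mul ε (-2) (d1 2 1) 1 p, hs12] at h
    have hkey : pd 1 (pd 2 (X 1)) p = 0 := by
      rw [pd_comm (hX 1) 1 2 p, pd_congr (i := (2 : Fin 3)) E11 p,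
        pd_const_add 2 p _ (dX 2 p)]
      exact E22' p
    rw [hkey] at h
    have h2 : μ * pd 1 (pd 1 (X 2)) p = μ * 0 := by linear_combination h
    exact mul_left_cancel₀ hμ h2
  -- identity I1 : e^{2t} ∂₁X2 = e^{-2t} ∂₀∂₀X1
  have I1 : ∀ p : Fin 3 → ℝ, Real.exp (2 * p 2) * pd 1 (X 2) p
      = Real.exp ((-2) * p 2) * pd 0 (pd 0 (X 1)) p := by
    intro p
    have h := pd_congr (i := (0 : Fin 3)) E01 p
    rw [pd_const] at h
    rw [pd_add 0 p (((diff_exp_lin 2).fun_mul (d1 1 0)) p) (((diff_exp_lin (-2)).fun_mul (d1 0 1)) p),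
      pd_exp_mul 2 (d1 1 0) 0 p, pd_exp_mul (-2) (d1 0 1) 0 p, hs02] at h
    have hkey : pd 0 (pd 1 (X 0)) p = -pd 1 (X 2) p := by
      rw [pd_comm (hX 0) 0 1 p, pd_congr (i := (1 : Fin 3)) E00 p,
        pd_const_sub 1 p _ (dX 2 p)]
    rw [hkey] at h
    linear_combination -h
  -- ∂₀ of E12
  have h0 : ∀ q : Fin 3 → ℝ, μ * pd 0 (pd 1 (X 2)) q
      + ε * Real.exp ((-2) * q 2) * pd 0 (pd 2 (X 1)) q = 0 := by
    intro q
    have h := pd_congr (i := (0 : Fin 3)) E12 q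
    rw [pd_const] at h
    rw [pd_add 0 q (((d1 1 2).const_mul μ) q)
        ((((diff_exp_lin (-2)).const_mul ε).fun_mul (d1 2 1)) q),
      pd_const_mul 0 q μ (d1 1 2 q), pd_cexp_mul ε (-2) (d1 2 1) 0 q, hs02] at h
    linear_combination h
  -- ∂₀∂₀∂₂ X1 = 0
  have hT2 : ∀ p : Fin 3 → ℝ, pd 0 (pd 0 (pd 2 (X 1))) p = 0 := by
    intro p
    have h := pd_congr (i := (0 : Fin 3)) h0 p
    rw [pd_const] at h
    rw [pd_add 0 p (((d2 0 1 2).const_mul μ) p)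
        ((((diff_exp_lin (-2)).const_mul ε).fun_mul (d2 0 2 1)) p),
      pd_const_mul 0 p μ (d2 0 1 2 p), pd_cexp_mul ε (-2) (d2 0 2 1) 0 p, hs02] at h
    have hkey : pd 0 (pd 0 (pd 1 (X 2))) p = 0 := by
      rw [pd_congr (i := (0 : Fin 3)) (fun q => pd_comm (hX 2) 0 1 q) p,
        pd_comm (s1 0 2) 0 1 p]
      exact pd_zero_of_zero hD00X2 1 p
    rw [hkey] at h
    have h2 : ε * Real.exp ((-2) * p 2) * pd 0 (pd 0 (pd 2 (X 1))) p = 0 := by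
      linear_combination h
    exact (mul_eq_zero.mp h2).resolve_left (mul_ne_zero hεne (hEne _))
  -- ∂₁ X2 = 0
  have hD1X2 : ∀ p : Fin 3 → ℝ, pd 1 (X 2) p = 0 := by
    intro p
    have h := pd_congr (i := (2 : Fin 3)) I1 p
    rw [pd_exp_mul 2 (d1 1 2) 2 p, pd_exp_mul (-2) (d2 0 0 1) 2 p, hs22] at h
    have hk1 : pd 2 (pd 1 (X 2)) p = 0 := h2X2zero 1 p
    have hk2 : pd 2 (pd 0 (pd 0 (X 1))) p = 0 := by
      rw [pd_comm (s1 0 1) 2 0 p,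
        pd_congr (i := (0 : Fin 3)) (fun q => pd_comm (hX 1) 2 0 q) p]
      exact hT2 p
    rw [hk1, hk2] at h
    have h4 : Real.exp (2 * p 2) * pd 1 (X 2) p = 0 := by
      linear_combination (1/4 : ℝ) * h + (1/2 : ℝ) * I1 p
    exact (mul_eq_zero.mp h4).resolve_left (hEne _)
  -- identity I2 : e^{-2t} ∂₀X2 = -(e^{2t} ∂₁∂₁X0)
  have I2 : ∀ p : Fin 3 → ℝ, Real.exp ((-2) * p 2) * pd 0 (X 2) p
      = -(Real.exp (2 * p 2) * pd 1 (pd 1 (X 0)) p) := by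
    intro p
    have h := pd_congr (i := (1 : Fin 3)) E01 p
    rw [pd_const] at h
    rw [pd_add 1 p (((diff_exp_lin 2).fun_mul (d1 1 0)) p) (((diff_exp_lin (-2)).fun_mul (d1 0 1)) p),
      pd_exp_mul 2 (d1 1 0) 1 p, pd_exp_mul (-2) (d1 0 1) 1 p, hs12] at h
    have hkey : pd 1 (pd 0 (X 1)) p = pd 0 (X 2) p := by
      rw [pd_comm (hX 1) 1 0 p, pd_congr (i := (0 : Fin 3)) E11 p,
        pd_const_add 0 p _ (dX 2 p)]
    rw [hkey] at h
    linear_combination h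
  -- ∂₁ of E02
  have h0' : ∀ q : Fin 3 → ℝ, μ * pd 1 (pd 0 (X 2)) q
      + ε * Real.exp (2 * q 2) * pd 1 (pd 2 (X 0)) q = 0 := by
    intro q
    have h := pd_congr (i := (1 : Fin 3)) E02 q
    rw [pd_const] at h
    rw [pd_add 1 q (((d1 0 2).const_mul μ) q)
        ((((diff_exp_lin 2).const_mul ε).fun_mul (d1 2 0)) q),
      pd_const_mul 1 q μ (d1 0 2 q), pd_cexp_mul ε 2 (d1 2 0) 1 q, hs12] at h
    linear_combination h
  -- ∂₁∂₁∂₂ X0 = 0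
  have hT2' : ∀ p : Fin 3 → ℝ, pd 1 (pd 1 (pd 2 (X 0))) p = 0 := by
    intro p
    have h := pd_congr (i := (1 : Fin 3)) h0' p
    rw [pd_const] at h
    rw [pd_add 1 p (((d2 1 0 2).const_mul μ) p)
        ((((diff_exp_lin 2).const_mul ε).fun_mul (d2 1 2 0)) p),
      pd_const_mul 1 p μ (d2 1 0 2 p), pd_cexp_mul ε 2 (d2 1 2 0) 1 p, hs12] at h
    have hkey : pd 1 (pd 1 (pd 0 (X 2))) p = 0 := by
      rw [pd_congr (i := (1 : Fin 3)) (fun q => pd_comm (hX 2) 1 0 q) p,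
        pd_comm (s1 1 2) 1 0 p]
      exact pd_zero_of_zero hD11X2 0 p
    rw [hkey] at h
    have h2 : ε * Real.exp (2 * p 2) * pd 1 (pd 1 (pd 2 (X 0))) p = 0 := by
      linear_combination h
    exact (mul_eq_zero.mp h2).resolve_left (mul_ne_zero hεne (hEne _))
  -- ∂₀ X2 = 0
  have hD0X2 : ∀ p : Fin 3 → ℝ, pd 0 (X 2) p = 0 := by
    intro p
    have h := pd_congr (i := (2 : Fin 3)) I2 p
    rw [pd_exp_mul (-2) (d1 0 2) 2 p, pd_neg 2 p, pd_exp_mul 2 (d2 1 1 0) 2 p, hs22] at h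
    have hk1 : pd 2 (pd 0 (X 2)) p = 0 := h2X2zero 0 p
    have hk2 : pd 2 (pd 1 (pd 1 (X 0))) p = 0 := by
      rw [pd_comm (s1 1 0) 2 1 p,
        pd_congr (i := (1 : Fin 3)) (fun q => pd_comm (hX 0) 2 1 q) p]
      exact hT2' p
    rw [hk1, hk2] at h
    have h4 : Real.exp ((-2) * p 2) * pd 0 (X 2) p = 0 := by
      linear_combination (-1/4 : ℝ) * h + (1/2 : ℝ) * I2 p
    exact (mul_eq_zero.mp h4).resolve_left (hEne _)
  -- ∂₂ X0 = 0 and ∂₂ X1 = 0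
  have hD2X0 : ∀ p : Fin 3 → ℝ, pd 2 (X 0) p = 0 := by
    intro p
    have h := E02 p
    rw [hD0X2 p, mul_zero, zero_add] at h
    exact (mul_eq_zero.mp h).resolve_left (mul_ne_zero hεne (hEne _))
  have hD2X1 : ∀ p : Fin 3 → ℝ, pd 2 (X 1) p = 0 := by
    intro p
    have h := E12 p
    rw [hD1X2 p, mul_zero, zero_add] at h
    exact (mul_eq_zero.mp h).resolve_left (mul_ne_zero hεne (hEne _))
  -- ∂₁ X0 = 0 and ∂₀ X1 = 0
  have hstep11 : ∀ p : Fin 3 → ℝ,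
      Real.exp (2 * p 2) * pd 1 (X 0) p = 0 ∧ Real.exp ((-2) * p 2) * pd 0 (X 1) p = 0 := by
    intro p
    have h := pd_congr (i := (2 : Fin 3)) E01 p
    rw [pd_const] at h
    rw [pd_add 2 p (((diff_exp_lin 2).fun_mul (d1 1 0)) p) (((diff_exp_lin (-2)).fun_mul (d1 0 1)) p),
      pd_exp_mul 2 (d1 1 0) 2 p, pd_exp_mul (-2) (d1 0 1) 2 p, hs22] at h
    have hk1 : pd 2 (pd 1 (X 0)) p = 0 := by
      rw [pd_comm (hX 0) 2 1 p]
      exact pd_zero_of_zero hD2X0 1 p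
    have hk2 : pd 2 (pd 0 (X 1)) p = 0 := by
      rw [pd_comm (hX 1) 2 0 p]
      exact pd_zero_of_zero hD2X1 0 p
    rw [hk1, hk2] at h
    constructor
    · linear_combination (1/4 : ℝ) * h + (1/2 : ℝ) * E01 p
    · linear_combination (-1/4 : ℝ) * h + (1/2 : ℝ) * E01 p
  have hD1X0 : ∀ p : Fin 3 → ℝ, pd 1 (X 0) p = 0 := fun p =>
    (mul_eq_zero.mp (hstep11 p).1).resolve_left (hEne _)
  have hD0X1 : ∀ p : Fin 3 → ℝ, pd 0 (X 1) p = 0 := fun p =>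
    (mul_eq_zero.mp (hstep11 p).2).resolve_left (hEne _)
  -- X 2 is constant
  have hX2c : ∀ p : Fin 3 → ℝ, X 2 p = X 2 (fun _ => 0) := by
    intro p
    refine const_of_pd_zero (dX 2) ?_ p _
    intro i q
    fin_cases i
    · exact hD0X2 q
    · exact hD1X2 q
    · exact E22' q
  -- X 0 affine
  have hX0 : ∀ p : Fin 3 → ℝ,
      X 0 p = X 0 (fun _ => 0) - (X 2 (fun _ => 0) + 1/μ) * p 0 := by
    intro p
    have hF : ∀ (i : Fin 3) (q : Fin 3 → ℝ),
        pd i (fun r => X 0 r + (X 2 (fun _ => 0) + 1/μ) * r 0) q = 0 := by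
      intro i q
      have base : ∀ j : Fin 3, pd j (fun r => X 0 r + (X 2 (fun _ => 0) + 1/μ) * r 0) q
          = pd j (X 0) q + (X 2 (fun _ => 0) + 1/μ) * (Pi.single j 1 : V3) 0 := by
        intro j
        rw [pd_add j q (dX 0 q) (((dcoord 0).const_mul _) q),
          pd_const_mul j q _ (dcoord 0 q), pd_coord]
      have c0 : pd (0 : Fin 3) (fun r => X 0 r + (X 2 (fun _ => 0) + 1/μ) * r 0) q = 0 := by
        rw [base 0, E00 q, hX2c q]
        simp only [Pi.single_eq_same, mul_one]
        linear_combination hc0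
      have c1 : pd (1 : Fin 3) (fun r => X 0 r + (X 2 (fun _ => 0) + 1/μ) * r 0) q = 0 := by
        rw [base 1, hD1X0 q]
        simp [Pi.single_apply]
      have c2 : pd (2 : Fin 3) (fun r => X 0 r + (X 2 (fun _ => 0) + 1/μ) * r 0) q = 0 := by
        rw [base 2, hD2X0 q]
        simp [Pi.single_apply]
      fin_cases i
      · exact c0
      · exact c1
      · exact c2
    have h := const_of_pd_zero ((dX 0).add ((dcoord 0).const_mul _)) hF p (fun _ => 0)
    have h2 : X 0 p + (X 2 (fun _ => 0) + 1/μ) * p 0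
        = X 0 (fun _ => 0) + (X 2 (fun _ => 0) + 1/μ) * 0 := h
    linarith [h2]
  -- X 1 affine
  have hX1 : ∀ p : Fin 3 → ℝ,
      X 1 p = X 1 (fun _ => 0) + (X 2 (fun _ => 0) - 1/μ) * p 1 := by
    intro p
    have hG : ∀ (i : Fin 3) (q : Fin 3 → ℝ),
        pd i (fun r => X 1 r - (X 2 (fun _ => 0) - 1/μ) * r 1) q = 0 := by
      intro i q
      have base : ∀ j : Fin 3, pd j (fun r => X 1 r - (X 2 (fun _ => 0) - 1/μ) * r 1) q
          = pd j (X 1) q - (X 2 (fun _ => 0) - 1/μ) * (Pi.single j 1 : V3) 1 := by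
        intro j
        rw [pd_sub j q (dX 1 q) (((dcoord 1).const_mul _) q),
          pd_const_mul j q _ (dcoord 1 q), pd_coord]
      have c0 : pd (0 : Fin 3) (fun r => X 1 r - (X 2 (fun _ => 0) - 1/μ) * r 1) q = 0 := by
        rw [base 0, hD0X1 q]
        simp [Pi.single_apply]
      have c1 : pd (1 : Fin 3) (fun r => X 1 r - (X 2 (fun _ => 0) - 1/μ) * r 1) q = 0 := by
        rw [base 1, E11 q, hX2c q]
        simp only [Pi.single_eq_same, mul_one]
        linear_combination hc0
      have c2 : pd (2 : Fin 3) (fun r => X 1 r - (X 2 (fun _ => 0) - 1/μ) * r 1) q = 0 := by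
        rw [base 2, hD2X1 q]
        simp [Pi.single_apply]
      fin_cases i
      · exact c0
      · exact c1
      · exact c2
    have h := const_of_pd_zero ((dX 1).sub ((dcoord 1).const_mul _)) hG p (fun _ => 0)
    have h2 : X 1 p - (X 2 (fun _ => 0) - 1/μ) * p 1
        = X 1 (fun _ => 0) - (X 2 (fun _ => 0) - 1/μ) * 0 := h
    linarith [h2]
  refine ⟨hlam, X 0 (fun _ => 0), X 1 (fun _ => 0), X 2 (fun _ => 0), fun p => ⟨?_, ?_, ?_⟩⟩
  · rw [hX0 p]
  · rw [hX1 p]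
  · exact hX2c p
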